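/- arXiv:1905.12010 — 9 statements merged into one kernel-verified Lean document; each statement's English description precedes it below -/
import Mathlib

section
/- Let D be a digraph on vertex set [n] and s ∈ [n]^m. Then s is a parking function on D if and only if for every subset B ⊆ [n] of vertices, the number of indices i with s_i ∈ R_D(B) is at most |R_D(B)|, where R_D(B) = ⋃_{v ∈ B} R_D(v). -/
/-!
A parking function is exactly a system of distinct representatives for the family of reach sets
`R_D(s i)`, so Hall's marriage theorem applies. Hall's condition for a set `A` of drivers only needs
to be checked on the reach set of `B = s '' A`, which contains every driver of `A`; conversely,
the drivers preferring a vertex of `R_D(B)` park injectively inside the forward-closed set `R_D(B)`.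
-/

open Function Relation

variable {α ι : Type*}

def reachSet (r : α → α → Prop) (B : Set α) : Set α :=
  {v | ∃ b ∈ B, ReflTransGen r b v}

theorem ncard_preimage_reachSet_le [Finite α] {r : α → α → Prop} {s g : ι → α}
    (hg : Injective g) (hsg : ∀ i, ReflTransGen r (s i) (g i)) (B : Set α) :
    (s ⁻¹' reachSet r B).ncard ≤ (reachSet r B).ncard := by
  have hmaps : g '' (s ⁻¹' reachSet r B) ⊆ reachSet r B := by
    rintro v ⟨i, ⟨b, hb, hbs⟩, rfl⟩
    exact ⟨b, hb, hbs.trans (hsg i)⟩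
  rw [← Set.ncard_image_of_injective _ hg]
  exact Set.ncard_le_ncard hmaps

theorem exists_injective_reflTransGen_of_forall_ncard_le [Finite ι] [Finite α]
    {r : α → α → Prop} {s : ι → α}
    (h : ∀ B, (s ⁻¹' reachSet r B).ncard ≤ (reachSet r B).ncard) :
    ∃ g : ι → α, Injective g ∧ ∀ i, ReflTransGen r (s i) (g i) := by
  classical
  have := Fintype.ofFinite α
  refine (Fintype.all_card_le_filter_rel_iff_exists_injective _).mp fun A => ?_
  have hreach : (({v | ∃ i ∈ A, ReflTransGen r (s i) v} : Finset α) : Set α) =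
      reachSet r (s '' A) := by
    ext v
    simp [reachSet]
  have hdrivers : (A : Set ι) ⊆ s ⁻¹' reachSet r (s '' A) :=
    fun i hi => ⟨s i, Set.mem_image_of_mem s hi, .refl⟩
  calc A.card = (A : Set ι).ncard := (Set.ncard_coe_finset A).symm
    _ ≤ (s ⁻¹' reachSet r (s '' A)).ncard := Set.ncard_le_ncard hdrivers
    _ ≤ (reachSet r (s '' A)).ncard := h _
    _ = _ := by rw [← hreach, Set.ncard_coe_finset]

theorem exists_injective_reflTransGen_iff [Finite ι] [Finite α] (r : α → α → Prop)
    (s : ι → α) :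
    (∃ g : ι → α, Injective g ∧ ∀ i, ReflTransGen r (s i) (g i)) ↔
      ∀ B, (s ⁻¹' reachSet r B).ncard ≤ (reachSet r B).ncard :=
  ⟨fun ⟨_, hg, hsg⟩ => ncard_preimage_reachSet_le hg hsg,
    exists_injective_reflTransGen_of_forall_ncard_le⟩

/-- A sequence `s` is a parking function on `D` iff for every vertex subset `B`,
the number of drivers preferring a vertex in `R_D(B)` is at most `|R_D(B)|`. -/
theorem parking_function_iff_hall_vertices (n m : ℕ) (D : Fin n → Fin n → Prop)
    (s : Fin m → Fin n) :
    (∃ g : Fin m → Fin n, Function.Injective g ∧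
        ∀ i, Relation.ReflTransGen D (s i) (g i)) ↔
      ∀ B : Set (Fin n),
        {i : Fin m | ∃ b ∈ B, Relation.ReflTransGen D b (s i)}.ncard ≤
          {v : Fin n | ∃ b ∈ B, Relation.ReflTransGen D b v}.ncard :=
  exists_injective_reflTransGen_iff D s
end

section
/- Let T̃ be a source tree on [n] (a rooted tree with all edges oriented away from the root) and s ∈ [n]^m. Then s is a parking function on T̃ if and only if for every vertex u ∈ [n], the number of indices i with s_i in the subtree T̃_u rooted at u is at most |T̃_u|. -/
/-!
By Hall's marriage theorem it suffices to check Hall's condition for the subtrees `T̃_{s_i}`.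
Since every vertex has at most one parent, two subtrees are either disjoint or nested. For such a
laminar family, the union of the sets indexed by `A` is the disjoint union of its maximal members
`T̃_u`, and each index `i ∈ A` with `T̃_{s_i} ⊆ T̃_u` has `s_i ∈ T̃_u`; by hypothesis there are at
most `|T̃_u|` of them.
-/

def IsSourceTree {n : ℕ} (D : Fin n → Fin n → Prop) (r : Fin n) : Prop :=
  (∀ v, Relation.ReflTransGen D r v) ∧ (∀ u u' v, D u v → D u' v → u = u') ∧
    (∀ u, ¬ D u r)

open Finset Relation

theorem Finset.card_le_card_biUnion_of_laminar {ι α : Type*} [DecidableEq α] {t : ι → Finset α}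
    (hlam : ∀ i j, (t i ∩ t j).Nonempty → t i ⊆ t j ∨ t j ⊆ t i) {A : Finset ι}
    (hcard : ∀ i ∈ A, #{j ∈ A | t j ⊆ t i} ≤ #(t i)) :
    #A ≤ #(A.biUnion t) := by
  classical
  set ℬ := (A.image t).filter (Maximal (· ∈ A.image t))
  have le_maximal : ∀ i ∈ A, ∃ B ∈ ℬ, t i ⊆ B := fun i hi ↦
    have ⟨B, hiB, hB⟩ := (A.image t).exists_le_maximal (mem_image_of_mem t hi)
    ⟨B, mem_filter.2 ⟨hB.prop, hB⟩, hiB⟩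
  have mem_maximal : ∀ B ∈ ℬ, ∃ i ∈ A, t i = B ∧ Maximal (· ∈ A.image t) (t i) := by
    intro B hB
    obtain ⟨hBA, hmax⟩ := mem_filter.1 hB
    obtain ⟨i, hi, rfl⟩ := mem_image.1 hBA
    exact ⟨i, hi, rfl, hmax⟩
  have disjoint : (ℬ : Set (Finset α)).PairwiseDisjoint id := by
    intro B hB B' hB' hne
    obtain ⟨i, -, rfl, hi⟩ := mem_maximal B hB
    obtain ⟨j, -, rfl, hj⟩ := mem_maximal B' hB'
    refine disjoint_iff_inter_eq_empty.2 (not_nonempty_iff_eq_empty.1 fun hij ↦ ?_)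
    rcases hlam i j hij with h | h
    · exact hne (hi.eq_of_le hj.prop h)
    · exact hne (hj.eq_of_le hi.prop h).symm
  have cover : A ⊆ ℬ.biUnion fun B ↦ {i ∈ A | t i ⊆ B} := fun i hi ↦
    have ⟨B, hB, hiB⟩ := le_maximal i hi
    mem_biUnion.2 ⟨B, hB, mem_filter.2 ⟨hi, hiB⟩⟩
  calc #A ≤ ∑ B ∈ ℬ, #{i ∈ A | t i ⊆ B} := (card_le_card cover).trans card_biUnion_le
    _ ≤ ∑ B ∈ ℬ, #B := sum_le_sum fun B hB ↦ by
      obtain ⟨i, hi, rfl, -⟩ := mem_maximal B hB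
      exact hcard i hi
    _ = #(ℬ.biUnion id) := (card_biUnion disjoint).symm
    _ ≤ #(A.biUnion t) := card_le_card fun v hv ↦ by
      obtain ⟨B, hB, hvB⟩ := mem_biUnion.1 hv
      obtain ⟨i, hi, rfl, -⟩ := mem_maximal B hB
      exact mem_biUnion.2 ⟨i, hi, hvB⟩

theorem Relation.ReflTransGen.total_of_left_unique {α : Type*} {D : α → α → Prop}
    (hD : Relator.LeftUnique D) {u v w : α} (hu : ReflTransGen D u w) (hv : ReflTransGen D v w) :
    ReflTransGen D u v ∨ ReflTransGen D v u := by
  have := ReflTransGen.total_of_right_unique (r := Function.swap D) (fun _ _ _ h h' ↦ hD h h')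
    (reflTransGen_swap.2 hu) (reflTransGen_swap.2 hv)
  simpa only [reflTransGen_swap, or_comm] using this

section Subtree

variable {α : Type*} [Fintype α] {D : α → α → Prop} {u v : α}

noncomputable def subtree (D : α → α → Prop) (u : α) : Finset α := by
  classical exact {v | ReflTransGen D u v}

@[simp]
theorem mem_subtree : v ∈ subtree D u ↔ ReflTransGen D u v := by
  classical simp [subtree]

theorem subtree_subset_subtree_iff : subtree D v ⊆ subtree D u ↔ ReflTransGen D u v :=
  ⟨fun h ↦ mem_subtree.1 (h (mem_subtree.2 .refl)),
    fun h _ hw ↦ mem_subtree.2 (h.trans (mem_subtree.1 hw))⟩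

theorem subtree_subset_or_subset [DecidableEq α] (hD : Relator.LeftUnique D)
    (h : (subtree D u ∩ subtree D v).Nonempty) :
    subtree D u ⊆ subtree D v ∨ subtree D v ⊆ subtree D u := by
  obtain ⟨w, hw⟩ := h
  rw [mem_inter, mem_subtree, mem_subtree] at hw
  simpa only [subtree_subset_subtree_iff, or_comm] using hw.1.total_of_left_unique hD hw.2

theorem card_subtree : #(subtree D u) = {v | ReflTransGen D u v}.ncard := by
  rw [← Set.ncard_coe_finset]
  congr 1
  ext v
  exact mem_subtree

end Subtree

/-- On a source tree, `s` is a parking function iff for each vertex `u` the number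
of drivers preferring the subtree rooted at `u` is at most the size of that subtree. -/
theorem source_tree_parking_function_iff (n m : ℕ) (D : Fin n → Fin n → Prop)
    (r : Fin n) (hT : IsSourceTree D r) (s : Fin m → Fin n) :
    (∃ g : Fin m → Fin n, Function.Injective g ∧
        ∀ i, Relation.ReflTransGen D (s i) (g i)) ↔
      ∀ u : Fin n,
        {i : Fin m | Relation.ReflTransGen D u (s i)}.ncard ≤
          {v : Fin n | Relation.ReflTransGen D u v}.ncard := by
  classical
  obtain ⟨-, hpar, -⟩ := hT
  have hD : Relator.LeftUnique D := fun _ _ _ ↦ hpar _ _ _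
  constructor
  · rintro ⟨g, hg, hsg⟩ u
    exact Set.ncard_le_ncard_of_injOn g (fun i hi ↦ hi.trans (hsg i)) hg.injOn
  · intro hcount
    have hall (A : Finset (Fin m)) : #A ≤ #(A.biUnion fun i ↦ subtree D (s i)) := by
      refine card_le_card_biUnion_of_laminar (fun i j ↦ subtree_subset_or_subset hD) fun i _ ↦ ?_
      calc #{j ∈ A | subtree D (s j) ⊆ subtree D (s i)}
          ≤ {j | ReflTransGen D (s i) (s j)}.ncard := by
            rw [← Set.ncard_coe_finset]
            exact Set.ncard_le_ncard fun j hj ↦ subtree_subset_subtree_iff.1 (mem_filter.1 hj).2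
        _ ≤ {v | ReflTransGen D (s i) v}.ncard := hcount (s i)
        _ = #(subtree D (s i)) := card_subtree.symm
    obtain ⟨g, hg, hgs⟩ := (all_card_le_biUnion_card_iff_exists_injective _).1 hall
    exact ⟨g, hg, fun i ↦ mem_subtree.1 (hgs i)⟩
end

section
/- Let T̃ be a source tree on [n], u a non-root vertex with parent v, and w a vertex reachable from v with w ∉ T̃_u. Let T̃' be the tree obtained from T̃ by removing the edge (v,u) and adding the edge (w,u). Then every parking function s ∈ [n]^m on T̃ is also a parking function on T̃'; in particular P(T̃, m) ≤ P(T̃', m), where P(D,m) counts the parking functions s ∈ [n]^m on D. -/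
def IsPF {n m : ℕ} (D : Fin n → Fin n → Prop) (s : Fin m → Fin n) : Prop :=
  ∃ g : Fin m → Fin n, Function.Injective g ∧
    ∀ i, Relation.ReflTransGen D (s i) (g i)

/-! Parking on `D` only depends on the reachability preorder of `D`, and moving the subtree
only enlarges it: a path to `w` never enters the subtree of `u`, so it survives the move and
`v ⟶* w ⟶ u` replaces the deleted edge `(v, u)`. -/

namespace Relation.ReflTransGen

variable {α : Type*} {D D' : α → α → Prop}

theorem lift_of_forall_ne_edge {u v : α} (hD : ∀ a b, D a b → ¬(a = v ∧ b = u) → D' a b)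
    (hvu : ReflTransGen D' v u) {a b : α} (h : ReflTransGen D a b) : ReflTransGen D' a b := by
  induction h with
  | refl => rfl
  | @tail x c _ hxc ih =>
    by_cases hx : x = v ∧ c = u
    · obtain ⟨rfl, rfl⟩ := hx
      exact ih.trans hvu
    · exact ih.tail (hD x c hxc hx)

theorem lift_of_not_reflTransGen {u w : α} (hD : ∀ a b, D a b → b ≠ u → D' a b)
    (hwu : ¬ ReflTransGen D u w) {a : α} (h : ReflTransGen D a w) : ReflTransGen D' a w := by
  induction h using head_induction_on with
  | refl => rfl
  | @head x c hxc hcw ih =>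
    refine head (hD x c hxc ?_) ih
    rintro rfl
    exact hwu hcw

end Relation.ReflTransGen

theorem IsPF.of_reflTransGen_imp {n m : ℕ} {D D' : Fin n → Fin n → Prop} {s : Fin m → Fin n}
    (hDD' : ∀ a b, Relation.ReflTransGen D a b → Relation.ReflTransGen D' a b) (hs : IsPF D s) :
    IsPF D' s :=
  let ⟨g, hg, hsg⟩ := hs
  ⟨g, hg, fun i => hDD' _ _ (hsg i)⟩

theorem source_tree_subtree_move_general (n m : ℕ) (D : Fin n → Fin n → Prop)
    (u v w : Fin n)
    (hvw : Relation.ReflTransGen D v w) (hwu : ¬ Relation.ReflTransGen D u w) :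
    (∀ s : Fin m → Fin n, IsPF D s →
      IsPF (fun a b => (D a b ∧ ¬(a = v ∧ b = u)) ∨ (a = w ∧ b = u)) s) ∧
    {s : Fin m → Fin n | IsPF D s}.ncard ≤
      {s : Fin m → Fin n |
        IsPF (fun a b => (D a b ∧ ¬(a = v ∧ b = u)) ∨ (a = w ∧ b = u)) s}.ncard := by
  set D' : Fin n → Fin n → Prop :=
    fun a b => (D a b ∧ ¬(a = v ∧ b = u)) ∨ (a = w ∧ b = u)
  have hvw' : Relation.ReflTransGen D' v w :=
    hvw.lift_of_not_reflTransGen (fun _ _ hab hbu => Or.inl ⟨hab, fun h => hbu h.2⟩) hwu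
  have hvu' : Relation.ReflTransGen D' v u := hvw'.tail (Or.inr ⟨rfl, rfl⟩)
  have hPF : ∀ s : Fin m → Fin n, IsPF D s → IsPF D' s := fun _ =>
    IsPF.of_reflTransGen_imp fun _ _ =>
      Relation.ReflTransGen.lift_of_forall_ne_edge (fun _ _ hab hne => Or.inl ⟨hab, hne⟩) hvu'
  exact ⟨hPF, Set.ncard_le_ncard hPF⟩

/-- Moving the subtree rooted at `u` from below its parent `v` to below a
descendant `w` of `v` (with `w` outside the subtree of `u`) cannot decrease the
set of parking functions; in particular `P(T̃,m) ≤ P(T̃',m)`. -/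
theorem source_tree_subtree_move (n m : ℕ) (D : Fin n → Fin n → Prop)
    (r u v w : Fin n) (hT : IsSourceTree D r) (hur : u ≠ r) (hvu : D v u)
    (hvw : Relation.ReflTransGen D v w) (hwu : ¬ Relation.ReflTransGen D u w) :
    (∀ s : Fin m → Fin n, IsPF D s →
      IsPF (fun a b => (D a b ∧ ¬(a = v ∧ b = u)) ∨ (a = w ∧ b = u)) s) ∧
    {s : Fin m → Fin n | IsPF D s}.ncard ≤
      {s : Fin m → Fin n |
        IsPF (fun a b => (D a b ∧ ¬(a = v ∧ b = u)) ∨ (a = w ∧ b = u)) s}.ncard :=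
  source_tree_subtree_move_general n m D u v w hvw hwu
end

section
/- For any source tree T̃ on n vertices and 0 ≤ m ≤ n, the number of parking functions satisfies Σ_{i=0}^{m} C(m,i) · (n-1)·(n-2)⋯(n-1-(m-i)+1) ≤ P(T̃, m) ≤ (n - m + 1)(n + 1)^{m-1}, where the lower bound is attained by the star (root with n-1 children) and the upper bound by the directed path. -/
/-!
Lower bound: every sequence in which the drivers not preferring the root `r` have pairwise
distinct preferences parks, since `r` reaches every vertex and `m ≤ n`; there are
`∑ C(m,i) (n-1)_(m-i)` of them.

Upper bound: ordering the vertices by (depth, index) gives a linear extension `φ` of the tree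
order, and `s ↦ φ ∘ s` maps parking functions on the tree injectively to parking functions on
the path `0 → 1 → ⋯ → n-1`. These are counted by Pollak's cyclic argument in `ℤ/(n+1)`: among
the `n + 1` diagonal shifts of any sequence at most `n + 1 - m` park, because the good shifts `c`
are strict running minima of the height `#{i | a i < y} - y`, which falls from `0` to `m - n - 1`
over a full turn.
-/

open Finset Relation Function

section Depth

variable {α : Type*} (D : α → α → Prop)

def ReachesIn : ℕ → α → α → Prop
  | 0 => Eq
  | k + 1 => fun u v => ∃ w, ReachesIn k u w ∧ D w v

variable {D}

lemma Relation.ReflTransGen.exists_reachesIn {u v : α} (h : ReflTransGen D u v) :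
    ∃ k, ReachesIn D k u v := by
  induction h with
  | refl => exact ⟨0, rfl⟩
  | tail _ hwv ih => obtain ⟨k, hk⟩ := ih; exact ⟨k + 1, _, hk, hwv⟩

variable (D) in
noncomputable def depth (r v : α) : ℕ := sInf {k | ReachesIn D k r v}

end Depth

section UpperBound

variable {n m : ℕ}

lemma IsSourceTree.depth_lt {D : Fin n → Fin n → Prop} {r : Fin n} (hT : IsSourceTree D r)
    {u v : Fin n} (huv : D u v) : depth D r u < depth D r v := by
  have hv : ReachesIn D (depth D r v) r v := Nat.sInf_mem (hT.1 v).exists_reachesIn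
  rcases hdv : depth D r v with _ | k
  · rw [hdv] at hv
    exact (hT.2.2 u (hv ▸ huv)).elim
  · rw [hdv] at hv
    obtain ⟨w, hw, hwv⟩ := hv
    obtain rfl : w = u := hT.2.1 w u v hwv huv
    exact Nat.lt_succ_of_le (Nat.sInf_le hw)

lemma IsSourceTree.exists_linearExtension {D : Fin n → Fin n → Prop} {r : Fin n}
    (hT : IsSourceTree D r) :
    ∃ φ : Fin n → Fin n, Injective φ ∧ ∀ ⦃u v⦄, ReflTransGen D u v → φ u ≤ φ v := by
  set key : Fin n → ℕ ×ₗ Fin n := fun v => toLex (depth D r v, v)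
  have key_inj : Injective key := fun u v h => congrArg Prod.snd (toLex.injective h)
  have key_mono : ∀ ⦃u v⦄, ReflTransGen D u v → key u ≤ key v := by
    intro u v huv
    induction huv with
    | refl => exact le_rfl
    | tail _ hwv ih => exact ih.trans (Prod.Lex.toLex_le_toLex.2 (.inl (hT.depth_lt hwv)))
  have hcard : #(univ.image key) = n := by rw [card_image_of_injective _ key_inj, card_fin]
  set e := (univ.image key).orderIsoOfFin hcard
  refine ⟨fun v => e.symm ⟨key v, mem_image_of_mem _ (mem_univ v)⟩, ?_, ?_⟩
  · intro u v h
    exact key_inj (congrArg Subtype.val (e.symm.injective h))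
  · intro u v huv
    exact e.symm.monotone (key_mono huv)

/-- Parking functions on the path `0 → 1 → ⋯ → n-1`, with preferences read in
`Fin (n + 1) = ℤ/(n+1)` so that they can be shifted cyclically; `k = n` excludes the value `n`. -/
def IsPathPF (n : ℕ) {m : ℕ} (a : Fin m → Fin (n + 1)) : Prop :=
  ∀ k ≤ n, #{i | k ≤ (a i : ℕ)} ≤ n - k

instance (n m : ℕ) : DecidablePred (IsPathPF n (m := m)) :=
  fun _ => inferInstanceAs (Decidable (∀ k ≤ n, _))

lemma IsPF.isPathPF {D : Fin n → Fin n → Prop} {φ : Fin n → Fin n}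
    (hφ : Injective φ) (hmono : ∀ ⦃u v⦄, ReflTransGen D u v → φ u ≤ φ v)
    {s : Fin m → Fin n} (hs : IsPF D s) : IsPathPF n (fun i => (φ (s i)).castSucc) := by
  obtain ⟨g, hg, hsg⟩ := hs
  intro k _
  calc #{i | k ≤ ((φ (s i)).castSucc : ℕ)}
      ≤ #(Ico k n) := by
        refine card_le_card_of_injOn (fun i => (φ (g i) : ℕ)) (fun i hi => ?_)
          (fun i _ j _ h => hg (hφ (Fin.ext h)))
        simp only [coe_filter, Set.mem_ofPred_eq, Fin.val_castSucc, mem_univ, true_and] at hi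
        exact mem_Ico.2 ⟨hi.trans (hmono (hsg i)), (φ (g i)).isLt⟩
    _ = n - k := Nat.card_Ico k n

lemma IsSourceTree.ncard_isPF_le_card_isPathPF {D : Fin n → Fin n → Prop} {r : Fin n}
    (hT : IsSourceTree D r) :
    {s : Fin m → Fin n | IsPF D s}.ncard ≤ #{a : Fin m → Fin (n + 1) | IsPathPF n a} := by
  obtain ⟨φ, hφ, hmono⟩ := hT.exists_linearExtension
  rw [← Set.ncard_coe_finset, coe_filter]
  refine Set.ncard_le_ncard_of_injOn (fun s i => (φ (s i)).castSucc)
    (fun s hs => ⟨mem_univ _, hs.isPathPF hφ hmono⟩) ?_ (Set.toFinite _)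
  intro s _ t _ hst
  funext i
  exact hφ (Fin.castSucc_injective _ (congrFun hst i))

lemma card_le_of_records (P : Finset ℕ) (H : ℕ → ℤ) (lo : ℤ)
    (hrec : ∀ p ∈ P, ∀ x < p, H p < H x) (hlo : ∀ p ∈ P, lo < H p) :
    #P ≤ (H 0 - lo).toNat := by
  rw [← Int.card_Ioc]
  refine card_le_card_of_injOn H (fun p hp => mem_Ioc.2 ⟨hlo p hp, ?_⟩) ?_
  · rcases Nat.eq_zero_or_pos p with rfl | hp0
    · exact le_rfl
    · exact (hrec p hp 0 hp0).le
  · intro p hp q hq hpq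
    by_contra hne
    rcases Nat.lt_or_gt_of_ne hne with h | h
    · exact (hrec q hq p h).ne' hpq
    · exact (hrec p hp q h).ne hpq

lemma card_filter_le_add_of_imp {ι : Type*} [Fintype ι] {p q r : ι → Prop} [DecidablePred p]
    [DecidablePred q] [DecidablePred r] (h : ∀ i, p i → q i ∨ r i) :
    #{i | p i} ≤ #{i | q i} + #{i | r i} := by
  classical
  calc #{i | p i} ≤ #{i | q i ∨ r i} := card_le_card (monotone_filter_right _ fun i _ => h i)
    _ ≤ #{i | q i} + #{i | r i} := by rw [filter_or]; exact card_union_le _ _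

lemma IsPathPF.card_shifts_isPathPF_le {a : Fin m → Fin (n + 1)} (ha : IsPathPF n a) :
    #{c | IsPathPF n (fun i => a i - c)} ≤ n + 1 - m := by
  set cnt : ℕ → ℕ := fun y => #{i | (a i : ℕ) < y}
  have hlo : ∀ p ≤ n, (m - (n + 1) : ℤ) < cnt p - p := by
    intro p hp
    have hsplit : m ≤ cnt p + #{i | p ≤ (a i : ℕ)} := by
      simpa using card_filter_le_add_of_imp (p := fun _ => True) fun i _ => lt_or_ge (a i : ℕ) p
    have htop := ha p hp
    omega
  -- the drivers preferring `[x, c)` are pushed by the shift `c` to the top `c - x` spots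
  have hrec : ∀ c : Fin (n + 1), IsPathPF n (fun i => a i - c) →
      ∀ x < (c : ℕ), (cnt c - c : ℤ) < cnt x - x := by
    intro c hc x hx
    have hsplit : cnt c ≤ cnt x + #{i | n + 1 - (c - x) ≤ ((a i - c : Fin (n + 1)) : ℕ)} := by
      refine card_filter_le_add_of_imp fun i hi => ?_
      by_cases hix : (a i : ℕ) < x
      · exact .inl hix
      · right
        rw [(Fin.coe_sub_iff_lt.2 (Fin.lt_def.2 hi))]
        omega
    have htop := hc (n + 1 - (c - x)) (by omega)
    dsimp only at htop
    have := c.isLt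
    omega
  calc #{c | IsPathPF n (fun i => a i - c)}
      = #((univ.filter fun c => IsPathPF n (fun i => a i - c)).image Fin.val) :=
        (card_image_of_injective _ Fin.val_injective).symm
    _ ≤ ((cnt 0 - 0 : ℤ) - (m - (n + 1))).toNat := by
        refine card_le_of_records _ (fun y => cnt y - y) _ ?_ ?_
        · simp only [mem_image, mem_filter, mem_univ, true_and]
          rintro _ ⟨c, hc, rfl⟩
          exact hrec c hc
        · simp only [mem_image, mem_filter, mem_univ, true_and]
          rintro _ ⟨c, -, rfl⟩
          exact hlo c (Nat.lt_succ_iff.1 c.isLt)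
    _ = n + 1 - m := by simp [cnt]

lemma card_shifts_isPathPF_le (a : Fin m → Fin (n + 1)) :
    #{c | IsPathPF n (fun i => a i - c)} ≤ n + 1 - m := by
  by_cases h : ∃ c₀, IsPathPF n (fun i => a i - c₀)
  · obtain ⟨c₀, hc₀⟩ := h
    calc #{c | IsPathPF n (fun i => a i - c)}
        = #{c | IsPathPF n (fun i => a i - c₀ - c)} := by
          simp only [card_filter]
          exact Fintype.sum_equiv (Equiv.subRight c₀) _ _ fun c => by
            simp only [Equiv.subRight_apply, sub_sub_sub_cancel_right]
      _ ≤ n + 1 - m := hc₀.card_shifts_isPathPF_le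
  · simp [not_exists.1 h]

variable (n m) in
lemma card_isPathPF_le :
    #{a : Fin m → Fin (n + 1) | IsPathPF n a} ≤ (n + 1 - m) * (n + 1) ^ (m - 1) := by
  have hshift : ∀ c : Fin (n + 1),
      #{a : Fin m → Fin (n + 1) | IsPathPF n (fun i => a i - c)} =
        #{a : Fin m → Fin (n + 1) | IsPathPF n a} := by
    intro c
    simp only [card_filter]
    exact Fintype.sum_equiv (Equiv.subRight fun _ => c) _ _ fun a => rfl
  refine Nat.le_of_mul_le_mul_left ?_ (Nat.succ_pos n)
  calc (n + 1) * #{a : Fin m → Fin (n + 1) | IsPathPF n a}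
      = ∑ c : Fin (n + 1), #{a : Fin m → Fin (n + 1) | IsPathPF n (fun i => a i - c)} := by
        simp [hshift]
    _ = ∑ a : Fin m → Fin (n + 1), #{c | IsPathPF n (fun i => a i - c)} := by
        simp only [card_filter]
        exact sum_comm
    _ ≤ ∑ _a : Fin m → Fin (n + 1), (n + 1 - m) :=
        sum_le_sum fun a _ => card_shifts_isPathPF_le a
    _ = (n + 1 - m) * (n + 1) ^ m := by simp [mul_comm]
    _ ≤ (n + 1) * ((n + 1 - m) * (n + 1) ^ (m - 1)) := by
        rw [mul_left_comm, ← pow_succ']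
        exact Nat.mul_le_mul_left _ (Nat.pow_le_pow_right (Nat.succ_pos n) (by omega))

end UpperBound

section LowerBound

variable {n m : ℕ}

lemma isPF_of_injOn {D : Fin n → Fin n → Prop} {r : Fin n}
    (hr : ∀ v, ReflTransGen D r v) (hm : m ≤ n) {s : Fin m → Fin n}
    (hs : Set.InjOn s {i | s i ≠ r}) : IsPF D s := by
  classical
  set J : Finset (Fin m) := {i | s i ≠ r}
  obtain ⟨t, hJt, -, ht⟩ := exists_subsuperset_card_eq (subset_univ (J.image s))
    (card_image_le.trans (card_le_univ J |>.trans_eq (Fintype.card_fin m))) (by simpa using hm)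
  obtain ⟨g, hg⟩ := exists_equiv_extend_of_card_eq (by simpa using ht.symm) hJt
    (by simpa [J] using hs)
  refine ⟨fun i => g i, Subtype.val_injective.comp g.injective, fun i => ?_⟩
  by_cases hi : s i = r
  · exact hi ▸ hr _
  · exact (hg i (by simpa [J] using hi)).symm ▸ ReflTransGen.refl

/-- The drivers in `I` prefer the root `r`, the others pairwise distinct vertices other than `r`
(these are exactly the parking functions on the star). -/
abbrev RootedInjSeq (n m : ℕ) (r : Fin n) : Type :=
  Σ I : Finset (Fin m), ({i // i ∉ I} ↪ {v : Fin n // v ≠ r})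

namespace RootedInjSeq

variable {r : Fin n}

def toFun (x : RootedInjSeq n m r) : Fin m → Fin n :=
  fun i => if h : i ∈ x.1 then r else x.2 ⟨i, h⟩

lemma toFun_eq_root_iff (x : RootedInjSeq n m r) (i : Fin m) : x.toFun i = r ↔ i ∈ x.1 := by
  unfold toFun
  split_ifs with h
  · simp [h]
  · simpa [h] using (x.2 ⟨i, h⟩).2

lemma injOn_toFun (x : RootedInjSeq n m r) : Set.InjOn x.toFun {i | x.toFun i ≠ r} := by
  intro i hi j hj hij
  simp only [Set.mem_ofPred_eq, ne_eq, toFun_eq_root_iff] at hi hj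
  have := x.2.injective (Subtype.ext (by simpa [toFun, hi, hj] using hij))
  exact congrArg Subtype.val this

lemma toFun_injective : Injective (toFun (n := n) (m := m) (r := r)) := by
  rintro ⟨I, e⟩ ⟨J, f⟩ h
  obtain rfl : I = J := by
    ext i
    rw [← toFun_eq_root_iff ⟨I, e⟩, ← toFun_eq_root_iff ⟨J, f⟩, h]
  congr
  refine Function.Embedding.ext fun ⟨i, hi⟩ => Subtype.ext ?_
  simpa [toFun, hi] using congrFun h i

lemma card_eq :
    Fintype.card (RootedInjSeq n m r) =
      ∑ i ∈ range (m + 1), m.choose i * (n - 1).descFactorial (m - i) := by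
  simp only [Fintype.card_sigma, Fintype.card_embedding_eq, Fintype.card_subtype_compl,
    Fintype.card_coe, Fintype.card_fin, Fintype.card_subtype_eq]
  rw [← powerset_univ, sum_powerset_apply_card (fun j => (n - 1).descFactorial (m - j)),
    card_univ, Fintype.card_fin]
  simp only [smul_eq_mul]

end RootedInjSeq

end LowerBound

/-- Extremal bounds on the number of `(n,m)`-parking functions on a source tree:
the star gives the lower bound and the path the upper bound. -/
theorem source_tree_parking_count_bounds (n m : ℕ) (hm : m ≤ n)
    (D : Fin n → Fin n → Prop) (r : Fin n) (hT : IsSourceTree D r) :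
    (∑ i ∈ Finset.range (m + 1), m.choose i * (n - 1).descFactorial (m - i)) ≤
        {s : Fin m → Fin n | IsPF D s}.ncard ∧
      {s : Fin m → Fin n | IsPF D s}.ncard ≤ (n - m + 1) * (n + 1) ^ (m - 1) := by
  constructor
  · rw [← RootedInjSeq.card_eq (r := r), ← Nat.card_eq_fintype_card, ← Nat.card_coe_set_eq]
    exact Nat.card_le_card_of_injective
      (fun x => ⟨x.toFun, isPF_of_injOn hT.1 hm x.injOn_toFun⟩)
      fun x y h => RootedInjSeq.toFun_injective (congrArg Subtype.val h)
  · calc {s : Fin m → Fin n | IsPF D s}.ncard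
        ≤ #{a : Fin m → Fin (n + 1) | IsPathPF n a} := hT.ncard_isPF_le_card_isPathPF
      _ ≤ (n + 1 - m) * (n + 1) ^ (m - 1) := card_isPathPF_le n m
      _ = (n - m + 1) * (n + 1) ^ (m - 1) := by rw [Nat.sub_add_comm hm]
end

section
/- On a directed path (vertices 1,…,n with edges i → i+1), the number of parking functions s ∈ [n]^m equals the number of classical (n,m)-parking functions, namely (n - m + 1)(n + 1)^{m - 1} for m ≥ 1. -/
/-!
Reachability on the directed path is `≤`, so by Hall's marriage theorem a parking function on the
path is the same as a classical parking function. These are counted by Pollak's circle argument: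
with `n + 1` spots arranged on a circle, every preference sequence in `(ZMod (n + 1))^m` parks all
cars and leaves exactly `n + 1 - m` spots free (a cycle lemma), the classical parking functions are
exactly the sequences leaving spot `n = -1` free, and rotating all preferences shows that each spot
is left free equally often. Hence `(n + 1)` times the count is `(n + 1 - m) (n + 1)^m`.
-/

open Finset

theorem reflTransGen_path_iff_le {n : ℕ} {a b : Fin n} :
    Relation.ReflTransGen (fun a b : Fin n => b.val = a.val + 1) a b ↔ a ≤ b := by
  refine ⟨fun h => ?_, fun h => ?_⟩
  · induction h with
    | refl => exact le_rfl
    | tail _ hbc ih => exact ih.trans (Fin.le_def.2 (by omega))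
  · obtain ⟨b, hb⟩ := b
    induction b with
    | zero => exact (Fin.ext (by simpa [Fin.le_def] using h) : a = ⟨0, hb⟩) ▸ .refl
    | succ b ih =>
      rcases (Fin.le_def.1 h).lt_or_eq with hlt | heq
      · exact .tail (ih (by omega) (Fin.le_def.2 (Nat.le_of_lt_succ hlt))) rfl
      · exact (Fin.ext heq : a = _) ▸ .refl

theorem exists_injective_le_iff {ι α : Type*} [Fintype ι] [LinearOrder α] [Fintype α]
    (s : ι → α) :
    (∃ g : ι → α, Function.Injective g ∧ ∀ i, s i ≤ g i) ↔
      ∀ a, #{i | a ≤ s i} ≤ #{b | a ≤ b} := by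
  classical
  constructor
  · rintro ⟨g, hg, hsg⟩ a
    refine card_le_card_of_injOn g (fun i hi => ?_) hg.injOn
    simp only [coe_filter, mem_univ, true_and, Set.mem_ofPred_eq] at hi ⊢
    exact hi.trans (hsg i)
  · intro hcount
    have hall : ∀ J : Finset ι, #J ≤ #(J.biUnion fun i => {b | s i ≤ b}) := by
      intro J
      obtain rfl | hJ := J.eq_empty_or_nonempty
      · simp
      obtain ⟨i₀, hi₀, hmin⟩ := J.exists_min_image s hJ
      calc #J ≤ #{i | s i₀ ≤ s i} := card_le_card fun i hi => by simpa using hmin i hi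
        _ ≤ #{b | s i₀ ≤ b} := hcount (s i₀)
        _ ≤ _ := card_le_card fun b hb => mem_biUnion.2 ⟨i₀, hi₀, hb⟩
    obtain ⟨g, hg, hsg⟩ := (all_card_le_biUnion_card_iff_exists_injective _).1 hall
    exact ⟨g, hg, fun i => by simpa using hsg i⟩

-- The classical `#{j | s j ≥ i} ≤ n - i + 1` for `i ∈ [n]`, with values shifted down by one.
def IsClassicalPF (n : ℕ) {m : ℕ} (s : Fin m → Fin n) : Prop :=
  ∀ i : Fin n, #{j | i ≤ s j} ≤ n - i

instance {n m : ℕ} : DecidablePred (IsClassicalPF n (m := m)) := fun _ => by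
  unfold IsClassicalPF
  infer_instance

theorem isPF_path_iff_isClassicalPF {n m : ℕ} (s : Fin m → Fin n) :
    IsPF (fun a b : Fin n => b.val = a.val + 1) s ↔ IsClassicalPF n s := by
  simp only [IsPF, reflTransGen_path_iff_le, exists_injective_le_iff, IsClassicalPF,
    filter_le_eq_Ici, Fin.card_Ici]

section CycleLemma

def windowMax {N : ℕ} (hN : 0 < N) (G : ℕ → ℤ) (u : ℕ) : ℤ :=
  (range N).sup' (nonempty_range_iff.2 hN.ne') fun j => G (u + j)

variable {N k : ℕ} {G : ℕ → ℤ}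

theorem le_windowMax (hN : 0 < N) {u j : ℕ} (hj : j < N) : G (u + j) ≤ windowMax hN G u :=
  le_sup' (fun j => G (u + j)) (mem_range.2 hj)

theorem windowMax_lt_iff (hN : 0 < N) {u : ℕ} {a : ℤ} :
    windowMax hN G u < a ↔ ∀ j < N, G (u + j) < a := by
  simp [windowMax, sup'_lt_iff]

theorem windowMax_add_period (hN : 0 < N) (hper : ∀ x, G (x + N) = G x - k) (u : ℕ) :
    windowMax hN G (u + N) = windowMax hN G u - k := by
  simp only [windowMax, sub_eq_add_neg, sup'_add]
  congr 1
  ext j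
  rw [add_right_comm, hper, sub_eq_add_neg]

theorem windowMax_eq_max_succ (hN : 0 < N) (hper : ∀ x, G (x + N) = G x - k) (u : ℕ) :
    windowMax hN G u = max (G u) (windowMax hN G (u + 1)) := by
  have hGu : G u ≤ windowMax hN G u := by simpa using le_windowMax hN (u := u) hN
  refine le_antisymm (sup'_le _ _ fun j hj => ?_) (max_le hGu (sup'_le _ _ fun j hj => ?_))
  · rw [mem_range] at hj
    rcases j with _ | j
    · exact le_max_of_le_left le_rfl
    · rw [← add_assoc, add_right_comm]
      exact le_max_of_le_right (le_windowMax hN (by omega))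
  · rw [mem_range] at hj
    rcases (Nat.add_one_le_of_lt hj).lt_or_eq with hj | hj
    · rw [add_assoc, add_comm 1]
      exact le_windowMax hN hj
    · rw [add_assoc, add_comm 1, hj, hper]
      omega

/-- The values `u` where `G u` exceeds all later values are exactly where `windowMax` drops (by one,
since `G` descends by at most one per step), and over a period `windowMax` drops by `k`. -/
theorem card_filter_strict_future_max (hN : 0 < N) (hstep : ∀ x, G x - 1 ≤ G (x + 1))
    (hper : ∀ x, G (x + N) = G x - k) :
    #{u ∈ range N | ∀ j < N, G (u + (j + 1)) < G u} = k := by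
  set W := windowMax hN G
  have hrecord (u : ℕ) : (∀ j < N, G (u + (j + 1)) < G u) ↔ W (u + 1) < G u := by
    simp only [W, windowMax_lt_iff hN, add_right_comm u 1, add_assoc]
  have hdrop (u : ℕ) : (if W (u + 1) < G u then 1 else 0) = W u - W (u + 1) := by
    have hmax : W u = max (G u) (W (u + 1)) := windowMax_eq_max_succ hN hper u
    have hstep' : G u - 1 ≤ W (u + 1) :=
      (hstep u).trans (by simpa using le_windowMax hN (u := u + 1) hN)
    split_ifs with h
    · rw [hmax, max_eq_left h.le]
      omega
    · rw [hmax, max_eq_right (not_lt.1 h), sub_self]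
  have hperiod : W N = W 0 - k := by simpa using windowMax_add_period hN hper 0
  zify
  simp only [hrecord, natCast_card_filter, hdrop, sum_range_sub', hperiod]
  ring

end CycleLemma

section FreeSpots

variable {N : ℕ} [NeZero N]

theorem sum_range_natCast_zmod {M : Type*} [AddCommMonoid M] (f : ZMod N → M) :
    ∑ i ∈ range N, f i = ∑ v, f v :=
  sum_nbij' (fun i => (i : ZMod N)) ZMod.val (by simp) (fun v _ => mem_range.2 (ZMod.val_lt v))
    (fun i hi => ZMod.val_cast_of_lt (mem_range.1 hi)) (fun v _ => ZMod.natCast_zmod_val v)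
    (fun _ _ => rfl)

/-- With `c w` cars preferring spot `w`, each driving forward around the circle to the first empty
spot, spot `v` stays empty iff for every `k` at most `k` cars prefer one of `v - k, …, v`. -/
def IsFreeSpot (c : ZMod N → ℕ) (v : ZMod N) : Prop :=
  ∀ k < N, ∑ i ∈ range (k + 1), c (v - i) ≤ k

instance (c : ZMod N → ℕ) : DecidablePred (IsFreeSpot c) := fun _ => by
  unfold IsFreeSpot
  infer_instance

theorem card_isFreeSpot {m : ℕ} (c : ZMod N → ℕ) (hc : ∑ v, c v = m) (hm : m ≤ N) :
    #{v | IsFreeSpot c v} = N - m := by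
  -- Walking backwards from spot `0`, `G x` is the number of cars minus spots met in `x` steps.
  let A (x : ℕ) : ℕ := ∑ i ∈ range x, c (-(i : ZMod N))
  let G (x : ℕ) : ℤ := A x - x
  have hA (u x : ℕ) : A (u + x) = A u + ∑ i ∈ range x, c (-u - i) := by
    simp [A, sum_range_add, neg_add_eq_sub]
  have hcycle (x : ℕ) : ∑ i ∈ range N, c (-x - i) = m :=
    (sum_range_natCast_zmod fun i : ZMod N => c (-x - i)).trans
      ((Equiv.sum_comp (Equiv.subLeft _) c).trans hc)
  have hstep (x : ℕ) : G x - 1 ≤ G (x + 1) := by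
    simp only [G, hA x 1, Nat.cast_add, Nat.cast_one]
    omega
  have hper (x : ℕ) : G (x + N) = G x - (N - m : ℕ) := by
    simp only [G, hA x N, hcycle, Nat.cast_add, Nat.cast_sub hm]
    ring
  have hfree (u : ℕ) : IsFreeSpot c (-u) ↔ ∀ j < N, G (u + (j + 1)) < G u := by
    refine forall₂_congr fun j _ => ?_
    simp only [G, hA, Nat.cast_add, Nat.cast_one]
    omega
  calc #{v | IsFreeSpot c v} = #{u ∈ range N | IsFreeSpot c (-((u : ℕ) : ZMod N))} := by
        rw [card_filter, card_filter,
          sum_range_natCast_zmod fun v => if IsFreeSpot c (-v) then 1 else 0]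
        exact (Equiv.sum_comp (Equiv.neg _) fun v => if IsFreeSpot c v then 1 else 0).symm
    _ = N - m := by
        simp only [hfree]
        exact card_filter_strict_future_max (NeZero.pos N) hstep hper

end FreeSpots

section SpotCount

variable {N m : ℕ}

def spotCount (t : Fin m → ZMod N) (w : ZMod N) : ℕ := #{j | t j = w}

theorem sum_spotCount [NeZero N] (t : Fin m → ZMod N) : ∑ w, spotCount t w = m := by
  simpa [spotCount] using
    (card_eq_sum_card_fiberwise (f := t) (s := univ) (t := univ) fun _ _ => mem_univ _).symm

theorem spotCount_add_const (t : Fin m → ZMod N) (d : ZMod N) :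
    spotCount (t + fun _ => d) = fun w => spotCount t (w - d) := by
  ext w
  simp [spotCount, eq_sub_iff_add_eq]

theorem isFreeSpot_comp_sub_iff (c : ZMod N → ℕ) (d v : ZMod N) :
    IsFreeSpot (fun w => c (w - d)) (v + d) ↔ IsFreeSpot c v := by
  simp [IsFreeSpot, sub_right_comm _ _ d]

theorem card_isFreeSpot_spotCount [NeZero N] (hm : m ≤ N) (v : ZMod N) :
    N * #{t : Fin m → ZMod N | IsFreeSpot (spotCount t) v} = (N - m) * N ^ m := by
  have hrot (w : ZMod N) : #{t : Fin m → ZMod N | IsFreeSpot (spotCount t) w} =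
      #{t : Fin m → ZMod N | IsFreeSpot (spotCount t) v} := by
    refine card_equiv (Equiv.addRight fun _ => v - w) fun t => ?_
    simp only [mem_filter, mem_univ, true_and, Equiv.coe_addRight, spotCount_add_const]
    rw [← isFreeSpot_comp_sub_iff _ (v - w), add_sub_cancel]
  calc N * #{t : Fin m → ZMod N | IsFreeSpot (spotCount t) v}
      = ∑ w, #{t : Fin m → ZMod N | IsFreeSpot (spotCount t) w} := by simp [hrot]
    _ = ∑ t : Fin m → ZMod N, #{w | IsFreeSpot (spotCount t) w} := by
      simp only [card_filter]
      exact sum_comm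
    _ = (N - m) * N ^ m := by simp [card_isFreeSpot _ (sum_spotCount _) hm, mul_comm]

theorem sum_spotCount_sub (t : Fin m → ZMod N) (v : ZMod N) {k : ℕ} (hk : k < N) :
    ∑ i ∈ range (k + 1), spotCount t (v - i) = #{j | (v - t j).val ≤ k} := by
  rw [card_eq_sum_card_fiberwise (f := fun j => (v - t j).val) (t := range (k + 1))
    fun j hj => by simpa [Nat.lt_succ_iff] using hj]
  refine sum_congr rfl fun i hik => ?_
  rw [mem_range] at hik
  have hi : i < N := by omega
  have : NeZero N := ⟨by omega⟩
  simp only [spotCount, filter_filter]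
  congr 1
  refine filter_congr fun j _ => ⟨fun h => ?_, fun h => ?_⟩
  · rw [h, sub_sub_cancel, ZMod.val_cast_of_lt hi]
    omega
  · rw [← h.2, ZMod.natCast_zmod_val, sub_sub_cancel]

theorem ne_of_isFreeSpot_spotCount [NeZero N] {t : Fin m → ZMod N} {v : ZMod N}
    (h : IsFreeSpot (spotCount t) v) (j : Fin m) : t j ≠ v := by
  intro hj
  have := h 0 (NeZero.pos N)
  simp only [zero_add, range_one, sum_singleton, Nat.cast_zero, sub_zero, spotCount,
    nonpos_iff_eq_zero, card_eq_zero, filter_eq_empty_iff] at this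
  exact this (mem_univ j) hj

end SpotCount

section ClassicalParking

variable {n m : ℕ}

theorem isClassicalPF_iff_isFreeSpot (s : Fin m → Fin n) :
    IsClassicalPF n s ↔ IsFreeSpot (spotCount fun j => ((s j : ℕ) : ZMod (n + 1))) (-1) := by
  have hneg_one : ((n : ℕ) : ZMod (n + 1)) = -1 := by
    rw [eq_neg_iff_add_eq_zero]
    exact_mod_cast ZMod.natCast_self (n + 1)
  have hdist (j : Fin m) : (-1 - ((s j : ℕ) : ZMod (n + 1))).val = n - s j := by
    have hs := (s j).isLt
    rw [← ZMod.val_cast_of_lt (show n - s j < n + 1 by omega), Nat.cast_sub hs.le, hneg_one]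
  have hcount (k : ℕ) (hk : k < n + 1) :
      ∑ i ∈ range (k + 1), spotCount (fun j => ((s j : ℕ) : ZMod (n + 1))) (-1 - i) =
        #{j | n - s j ≤ k} := by
    simp only [sum_spotCount_sub _ _ hk, hdist]
  refine ⟨fun h k hk => ?_, fun h i => ?_⟩
  · rw [hcount k hk]
    rcases k with _ | k
    · exact (card_eq_zero.2 (filter_eq_empty_iff.2 fun j _ => by have := (s j).isLt; omega)).le
    · convert h ⟨n - (k + 1), by omega⟩ using 2
      · exact filter_congr fun j _ => by simp only [Fin.le_def]; omega
      · simp only; omega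
  · have := h (n - i) (by omega)
    rw [hcount _ (by omega)] at this
    convert this using 2
    exact filter_congr fun j _ => by simp only [Fin.le_def]; omega

theorem card_isClassicalPF :
    #{s : Fin m → Fin n | IsClassicalPF n s} =
      #{t : Fin m → ZMod (n + 1) | IsFreeSpot (spotCount t) (-1)} := by
  refine card_nbij (fun s j => ((s j : ℕ) : ZMod (n + 1))) (fun s hs => ?_) (fun s _ s' _ h => ?_)
    fun t ht => ?_
  · simpa [isClassicalPF_iff_isFreeSpot] using hs
  · funext j
    have := congrArg ZMod.val (congrFun h j)
    simp only [ZMod.val_cast_of_lt (Nat.lt_succ_of_lt (Fin.is_lt _))] at this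
    exact Fin.ext this
  · simp only [coe_filter, mem_univ, true_and, Set.mem_ofPred_eq] at ht
    have hlt (j : Fin m) : (t j).val < n := by
      have hne := ne_of_isFreeSpot_spotCount ht j
      have := ZMod.val_lt (t j)
      refine lt_of_le_of_ne (Nat.le_of_lt_succ this) fun heq => hne ?_
      exact ZMod.val_injective _ (heq.trans (ZMod.val_neg_one n).symm)
    refine ⟨fun j => ⟨(t j).val, hlt j⟩, ?_, funext fun j => ZMod.natCast_zmod_val (t j)⟩
    simpa [isClassicalPF_iff_isFreeSpot, ZMod.natCast_zmod_val] using ht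

end ClassicalParking

/-- On the directed path, the number of `(n,m)`-parking functions is
`(n - m + 1)(n + 1)^{m-1}`. -/
theorem path_parking_count (n m : ℕ) (hm1 : 1 ≤ m) (hmn : m ≤ n) :
    {s : Fin m → Fin n | IsPF (fun a b : Fin n => b.val = a.val + 1) s}.ncard =
      (n - m + 1) * (n + 1) ^ (m - 1) := by
  have hclassical : {s : Fin m → Fin n | IsPF (fun a b : Fin n => b.val = a.val + 1) s} =
      ({s | IsClassicalPF n s} : Finset (Fin m → Fin n)) := by
    ext s
    simp [isPF_path_iff_isClassicalPF]
  have hcount := card_isFreeSpot_spotCount (N := n + 1) (m := m) (by omega) (-1)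
  have hpow : (n + 1) ^ m = (n + 1) * (n + 1) ^ (m - 1) := by
    rw [← pow_succ', Nat.sub_add_cancel hm1]
  rw [hclassical, Set.ncard_coe_finset, card_isClassicalPF]
  refine Nat.eq_of_mul_eq_mul_left (by omega : 0 < n + 1) ?_
  rw [hcount, hpow, show n + 1 - m = n - m + 1 by omega]
  ring
end

section
/- For any mapping digraph M on [n] (functional digraph of some f : [n] → [n]) and 0 ≤ m ≤ n, the number of parking functions satisfies m! ≤ n(n-1)⋯(n-m+1) ≤ P(M, m) ≤ n^m, and the same bounds hold for the inverse mapping digraph M̃ obtained by reversing all edges. -/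
theorem ncard_setOf_injective (α β : Type*) [Fintype α] [Fintype β] :
    {s : α → β | Function.Injective s}.ncard =
      (Fintype.card β).descFactorial (Fintype.card α) := by
  classical
  rw [← Nat.card_coe_set_eq, Set.coe_ofPred,
    Nat.card_congr (Equiv.subtypeInjectiveEquivEmbedding α β), Nat.card_eq_fintype_card,
    Fintype.card_embedding_eq]

namespace IsPF

variable {n m : ℕ} (D : Fin n → Fin n → Prop)

theorem of_injective {s : Fin m → Fin n} (hs : Function.Injective s) : IsPF D s :=
  ⟨s, hs, fun _ => .refl⟩

theorem descFactorial_le_ncard : n.descFactorial m ≤ {s : Fin m → Fin n | IsPF D s}.ncard :=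
  calc n.descFactorial m = {s : Fin m → Fin n | Function.Injective s}.ncard := by
        simpa using (ncard_setOf_injective (Fin m) (Fin n)).symm
    _ ≤ _ := Set.ncard_le_ncard (fun _ => of_injective D) (Set.toFinite _)

theorem ncard_le_pow : {s : Fin m → Fin n | IsPF D s}.ncard ≤ n ^ m :=
  calc _ ≤ (Set.univ : Set (Fin m → Fin n)).ncard :=
        Set.ncard_le_ncard (Set.subset_univ _) Set.finite_univ
    _ = n ^ m := by simp

end IsPF

/-- For any mapping digraph `M_f` (edges `(i, f i)`) and its reverse `M̃_f`
(edges `(f i, i)`), `m! ≤ n^{\underline m} ≤ P(·, m) ≤ n^m`. -/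
theorem mapping_parking_count_bounds (n m : ℕ) (hm : m ≤ n) (f : Fin n → Fin n) :
    m.factorial ≤ n.descFactorial m ∧
      n.descFactorial m ≤
        {s : Fin m → Fin n | IsPF (fun a b : Fin n => f a = b) s}.ncard ∧
      {s : Fin m → Fin n | IsPF (fun a b : Fin n => f a = b) s}.ncard ≤ n ^ m ∧
      n.descFactorial m ≤
        {s : Fin m → Fin n | IsPF (fun a b : Fin n => f b = a) s}.ncard ∧
      {s : Fin m → Fin n | IsPF (fun a b : Fin n => f b = a) s}.ncard ≤ n ^ m :=
  ⟨Nat.descFactorial_self m ▸ Nat.descFactorial_le m hm,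
    IsPF.descFactorial_le_ncard _, IsPF.ncard_le_pow _,
    IsPF.descFactorial_le_ncard _, IsPF.ncard_le_pow _⟩
end

section
/- Let M̃_f be an inverse mapping digraph on [n] and s ∈ [n]^n a parking function on M̃_f. Then in each directed cycle of M̃_f there exists at least one edge e such that s is still a parking function on the digraph obtained by deleting e. -/
/-!
Cutting the edge `(f d, d)` of the cycle only affects cars starting on the cycle: from the cycle
vertex `f^[p] d` they can now reach just the trees hanging at `f d, …, f^[p] d`. By Hall's theorem
the cars can still park as soon as each such arc has nonpositive excess (cars starting there minus
spots there). The whole basin of the cycle has excess `0`, since the cars park bijectively, so the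
cycle lemma (cut where the partial sums of the excess are maximal) provides such a `d`.
-/

open Function Finset Relation

namespace InverseMappingDigraph

variable {α ι : Type*} {f : α → α}

theorem reflTransGen_iff_exists_iterate {x y : α} :
    ReflTransGen (fun a b => f b = a) x y ↔ ∃ k, f^[k] y = x := by
  constructor
  · intro h
    induction h with
    | refl => exact ⟨0, rfl⟩
    | tail _ hzy ih =>
      obtain ⟨k, hk⟩ := ih
      exact ⟨k + 1, by rw [iterate_succ_apply, hzy, hk]⟩
  · rintro ⟨k, rfl⟩
    induction k generalizing y with
    | zero => exact .refl
    | succ k ih => exact (ih (y := f y)).tail rfl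

theorem exists_iterate_iterate_eq {u y : α} (hu : u ∈ periodicPts f) {k : ℕ} (hk : f^[k] y = u)
    (j : ℕ) : ∃ k', f^[k'] (f^[j] y) = u := by
  have hj : j ≤ minimalPeriod f u * j + k :=
    le_add_right (Nat.le_mul_of_pos_left j (minimalPeriod_pos_of_mem_periodicPts hu))
  refine ⟨minimalPeriod f u * j + k - j, ?_⟩
  rw [← iterate_add_apply, Nat.sub_add_cancel hj, iterate_add_apply, hk]
  exact ((isPeriodicPt_minimalPeriod f u).mul_const j).eq

theorem exists_iterate_eq_of_pos {u : α} (hu : u ∈ periodicPts f) {r : ℕ} (hr : 0 < r) :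
    ∃ p, 0 < p ∧ p ≤ minimalPeriod f u ∧ f^[p] u = f^[r] u :=
  ⟨(r - 1) % minimalPeriod f u + 1, Nat.succ_pos _,
    Nat.mod_lt _ (minimalPeriod_pos_of_mem_periodicPts hu), by
    rw [iterate_succ_apply', iterate_mod_minimalPeriod_eq, ← iterate_succ_apply' f]
    congr
    omega⟩

theorem iterate_injOn_Ioc_minimalPeriod {x : α} :
    (Set.Ioc 0 (minimalPeriod f x)).InjOn (f^[·] x) := by
  intro i hi j hj hij
  have hx : x ∈ periodicPts f := minimalPeriod_pos_iff_mem_periodicPts.mp (hi.1.trans_le hi.2)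
  have hsucc : ∀ i, 0 < i → f^[i] x = f^[i - 1] (f x) := fun i hi => by
    rw [← iterate_succ_apply, Nat.succ_eq_add_one, Nat.sub_add_cancel hi]
  have := iterate_injOn_Iio_minimalPeriod (f := f) (x := f x)
    (show i - 1 < minimalPeriod f (f x) by rw [minimalPeriod_apply hx]; grind)
    (show j - 1 < minimalPeriod f (f x) by rw [minimalPeriod_apply hx]; grind)
    (by simpa only [hsucc i hi.1, hsucc j hj.1] using hij)
  grind

section cutReach

variable [Fintype α]

open Classical in
/-- The vertices reachable from `x` in `M̃_f` once the edge `(f d, d)` is deleted: the path from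
`x` to `y` visits `f^[k] y, …, f y, y`, and it uses the deleted edge iff it passes through `d`
before arriving at `y`. -/
noncomputable def cutReach (f : α → α) (d x : α) : Finset α :=
  {y | ∃ k, f^[k] y = x ∧ ∀ j < k, f^[j] y ≠ d}

@[simp]
theorem mem_cutReach {d x y : α} :
    y ∈ cutReach f d x ↔ ∃ k, f^[k] y = x ∧ ∀ j < k, f^[j] y ≠ d := by
  simp [cutReach]

theorem mem_cutReach_self {u y : α} : y ∈ cutReach f u u ↔ ∃ k, f^[k] y = u := by
  classical
  refine ⟨fun h => ?_, fun h => ?_⟩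
  · obtain ⟨k, hk, -⟩ := mem_cutReach.mp h
    exact ⟨k, hk⟩
  · exact mem_cutReach.mpr ⟨Nat.find h, Nat.find_spec h, fun j hj => Nat.find_min h hj⟩

theorem reflTransGen_of_mem_cutReach {d x y : α} (h : y ∈ cutReach f d x) :
    ReflTransGen (fun a b => f b = a ∧ ¬(a = f d ∧ b = d)) x y := by
  obtain ⟨k, rfl, hk⟩ := mem_cutReach.mp h
  clear h
  induction k generalizing y with
  | zero => exact .refl
  | succ k ih =>
    have hk' : ∀ j < k, f^[j] (f y) ≠ d := fun j hj => by
      simpa [iterate_succ_apply] using hk (j + 1) (by omega)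
    exact (ih (y := f y) hk').tail ⟨rfl, fun h => hk 0 k.succ_pos h.2⟩

theorem cutReach_iterate_succ [DecidableEq α] {u : α} {p : ℕ} (hp : 0 < p)
    (hpm : p < minimalPeriod f u) :
    cutReach f u (f^[p + 1] u) = cutReach f u (f^[p] u) ∪ cutReach f (f^[p] u) (f^[p + 1] u) := by
  ext y
  simp only [mem_union, mem_cutReach]
  constructor
  · rintro ⟨k, hk, hku⟩
    by_cases h : ∃ j < k, f^[j] y = f^[p] u
    · obtain ⟨j, hjk, hj⟩ := h
      exact .inl ⟨j, hj, fun i hi => hku i (hi.trans hjk)⟩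
    · push Not at h
      exact .inr ⟨k, hk, h⟩
  · rintro (⟨k, hk, hku⟩ | ⟨k, hk, hkp⟩)
    · refine ⟨k + 1, by rw [iterate_succ_apply', hk, iterate_succ_apply'], fun j hj => ?_⟩
      rcases Nat.lt_succ_iff_lt_or_eq.mp hj with hj | rfl
      · exact hku j hj
      · rw [hk]
        exact fun h => hpm.ne (iterate_injOn_Ioc_minimalPeriod ⟨hp, hpm.le⟩ ⟨hp.trans hpm, le_rfl⟩
          (h.trans iterate_minimalPeriod.symm))
    · refine ⟨k, hk, fun j hj hju => ?_⟩
      by_cases hjp : p + j < k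
      · exact hkp (p + j) hjp (by rw [iterate_add_apply, hju])
      · have h : f^[k - j] u = f^[p + 1] u := by
          rw [← hk, ← Nat.sub_add_cancel hj.le, iterate_add_apply, hju, Nat.sub_add_cancel hj.le]
        have := iterate_injOn_Ioc_minimalPeriod (f := f) ⟨by omega, by omega⟩ ⟨by omega, hpm⟩ h
        omega

theorem disjoint_cutReach_iterate {u : α} {p : ℕ} (hp : 0 < p) (hpm : p < minimalPeriod f u) :
    Disjoint (cutReach f u (f^[p] u)) (cutReach f (f^[p] u) (f^[p + 1] u)) := by
  set m := minimalPeriod f u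
  refine disjoint_left.mpr fun y h₁ h₂ => ?_
  obtain ⟨k₁, hk₁, hku⟩ := mem_cutReach.mp h₁
  obtain ⟨k₂, hk₂, hkp⟩ := mem_cutReach.mp h₂
  have hk : k₂ ≤ k₁ := not_lt.mp fun h => hkp k₁ h hk₁
  -- going once around the cycle from `f^[p + 1] u` reaches `u` before `f^[p] u`
  have hu : f^[m - (p + 1) + k₂] y = u := by
    rw [iterate_add_apply, hk₂, ← iterate_add_apply, Nat.sub_add_cancel hpm, iterate_minimalPeriod]
  refine hku _ (not_le.mp fun hle => hp.ne' ?_) hu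
  have h : f^[m - (p + 1) + k₂ - k₁ + p] u = f^[m] u := by
    rw [iterate_add_apply, ← hk₁, ← iterate_add_apply, Nat.sub_add_cancel hle, hu,
      iterate_minimalPeriod]
  have := iterate_injOn_Ioc_minimalPeriod (f := f) ⟨by omega, by omega⟩ ⟨by omega, le_rfl⟩ h
  omega

theorem iterate_mem_cutReach_iterate {d : α} {p q : ℕ} (hp : 0 < p) (hpq : p ≤ q)
    (hq : q ≤ minimalPeriod f d) : f^[p] d ∈ cutReach f d (f^[q] d) := by
  refine mem_cutReach.mpr ⟨q - p, by rw [← iterate_add_apply, Nat.sub_add_cancel hpq], ?_⟩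
  intro j hj h
  rw [← iterate_add_apply] at h
  have := iterate_injOn_Ioc_minimalPeriod (f := f) ⟨by omega, by omega⟩ ⟨by omega, le_rfl⟩
    (h.trans iterate_minimalPeriod.symm)
  omega

theorem mem_cutReach_of_forall_iterate_ne {d x y : α} (hd : d ∈ periodicPts f)
    (hx : ∀ p, 0 < p → p ≤ minimalPeriod f d → f^[p] d ≠ x) {k : ℕ} (hk : f^[k] y = x) :
    y ∈ cutReach f d x := by
  refine mem_cutReach.mpr ⟨k, hk, fun j hj hjd => ?_⟩
  obtain ⟨p, hp, hpm, hpx⟩ := exists_iterate_eq_of_pos hd (Nat.sub_pos_of_lt hj)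
  refine hx p hp hpm ?_
  rw [hpx, ← hjd, ← iterate_add_apply, Nat.sub_add_cancel hj.le, hk]

theorem iterate_mem_cutReach_or {d x y : α} (h : y ∈ cutReach f d x) (k : ℕ) :
    f^[k] y ∈ cutReach f d x ∨ ∃ r, f^[k] y = f^[r + 1] x := by
  obtain ⟨l, hl, hld⟩ := mem_cutReach.mp h
  rcases le_or_gt k l with hkl | hlk
  · refine .inl (mem_cutReach.mpr ⟨l - k, ?_, fun j hj => ?_⟩)
    · rw [← iterate_add_apply, Nat.sub_add_cancel hkl, hl]
    · rw [← iterate_add_apply]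
      exact hld _ (by omega)
  · refine .inr ⟨k - l - 1, ?_⟩
    rw [← hl, ← iterate_add_apply]
    congr 1
    omega

end cutReach

section excess

variable [DecidableEq α] [Fintype ι]

def excess (s : ι → α) (X : Finset α) : ℤ :=
  #{i | s i ∈ X} - #X

theorem excess_union (s : ι → α) {X Y : Finset α} (h : Disjoint X Y) :
    excess s (X ∪ Y) = excess s X + excess s Y := by
  have hcard : #{i | s i ∈ X ∪ Y} = #{i | s i ∈ X} + #{i | s i ∈ Y} := by
    classical
    rw [← card_union_of_disjoint (disjoint_filter.mpr fun i _ hX hY => disjoint_left.mp h hX hY),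
      ← filter_or]
    simp only [mem_union]
  simp only [excess, hcard, card_union_of_disjoint h]
  push_cast
  ring

theorem card_le_card_of_excess_nonpos {s g : ι → α} (hg : Injective g) {A : Finset ι}
    {X N : Finset α} (hX : excess s X ≤ 0) (hXN : X ⊆ N)
    (hgN : ∀ i ∈ A, s i ∉ X → g i ∈ N \ X) : #A ≤ #N := by
  classical
  have hin : #{i ∈ A | s i ∈ X} ≤ #X := by
    have := card_le_card (filter_subset_filter (fun i => s i ∈ X) (subset_univ A))
    unfold excess at hX
    omega
  have hout : #{i ∈ A | s i ∉ X} ≤ #(N \ X) := by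
    refine card_le_card_of_injOn g (fun i hi => ?_) hg.injOn
    rw [coe_filter] at hi
    exact hgN i hi.1 hi.2
  calc #A = #{i ∈ A | s i ∈ X} + #{i ∈ A | s i ∉ X} := (card_filter_add_card_filter_not _).symm
    _ ≤ #X + #(N \ X) := add_le_add hin hout
    _ = #N := by rw [add_comm, card_sdiff_add_card_eq_card hXN]

variable [Fintype α]

theorem excess_cutReach_iterate (s : ι → α) {u : α} {p : ℕ} (hp : 0 < p)
    (hpm : p ≤ minimalPeriod f u) :
    excess s (cutReach f u (f^[p] u)) =
      ∑ j ∈ range p, excess s (cutReach f (f^[j] u) (f^[j + 1] u)) := by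
  induction p, hp using Nat.le_induction with
  | base => rw [sum_range_one]; rfl
  | succ p hp ih =>
    rw [cutReach_iterate_succ hp hpm, excess_union s (disjoint_cutReach_iterate hp hpm),
      ih (by omega), sum_range_succ]

/-- A car starts in the basin of a cycle iff it parks there. -/
theorem excess_cutReach_self {s g : ι → α} (hg : Bijective g)
    (hgs : ∀ i, ∃ k, f^[k] (g i) = s i) {u : α} (hu : u ∈ periodicPts f) :
    excess s (cutReach f u u) = 0 := by
  have hsg : ∀ i, s i ∈ cutReach f u u ↔ g i ∈ cutReach f u u := by
    intro i
    obtain ⟨k, hk⟩ := hgs i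
    rw [← hk, mem_cutReach_self, mem_cutReach_self]
    constructor
    · rintro ⟨l, hl⟩
      exact ⟨l + k, by rw [iterate_add_apply, hl]⟩
    · rintro ⟨l, hl⟩
      exact exists_iterate_iterate_eq hu hl k
  have hcard : #{i | s i ∈ cutReach f u u} = #(cutReach f u u) := by
    simp_rw [hsg]
    refine card_nbij g (fun i hi => by simpa using hi) hg.injective.injOn fun y hy => ?_
    obtain ⟨i, rfl⟩ := hg.surjective y
    exact ⟨i, by simpa using hy, rfl⟩
  simp [excess, hcard]

/-- The cycle lemma: the partial sums `Φ` of the excess along the cycle are periodic, as the whole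
basin has excess `0`, so cutting just after a maximum of `Φ` works. -/
theorem exists_excess_cutReach_nonpos {s : ι → α} {a : α} (ha : a ∈ periodicPts f)
    (h₀ : ∀ u ∈ periodicPts f, excess s (cutReach f u u) = 0) :
    ∃ P, ∀ p, 0 < p → p ≤ minimalPeriod f a →
      excess s (cutReach f (f^[P] a) (f^[p] (f^[P] a))) ≤ 0 := by
  set m := minimalPeriod f a
  have hm : 0 < m := minimalPeriod_pos_of_mem_periodicPts ha
  set Φ : ℕ → ℤ := fun t => ∑ j ∈ range t, excess s (cutReach f (f^[j] a) (f^[j + 1] a))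
  have harc : ∀ t p, 0 < p → p ≤ m →
      excess s (cutReach f (f^[t] a) (f^[p] (f^[t] a))) = Φ (t + p) - Φ t := by
    intro t p hp hpm
    rw [excess_cutReach_iterate s hp (by rwa [minimalPeriod_apply_iterate ha])]
    simp only [Φ, sum_range_add, ← iterate_add_apply, add_comm, add_assoc, add_sub_cancel_left]
  have hΦ : Periodic Φ m := fun t => by
    have h := harc t m hm le_rfl
    rw [((isPeriodicPt_minimalPeriod f a).apply_iterate t).eq,
      h₀ _ ⟨m, hm, (isPeriodicPt_minimalPeriod f a).apply_iterate t⟩] at h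
    linarith
  obtain ⟨P, -, hP⟩ := (range m).exists_max_image Φ (nonempty_range_iff.mpr hm.ne')
  refine ⟨P, fun p hp hpm => ?_⟩
  rw [harc P p hp hpm, sub_nonpos, ← hΦ.map_mod_nat]
  exact hP _ (mem_range.mpr (Nat.mod_lt _ hm))

theorem card_le_card_biUnion_cutReach {s g : ι → α} (hg : Injective g)
    (hgs : ∀ i, ∃ k, f^[k] (g i) = s i) {d : α} (hd : d ∈ periodicPts f)
    (hex : ∀ p, 0 < p → p ≤ minimalPeriod f d → excess s (cutReach f d (f^[p] d)) ≤ 0)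
    (A : Finset ι) : #A ≤ #(A.biUnion fun i => cutReach f d (s i)) := by
  classical
  set m := minimalPeriod f d
  set N := A.biUnion fun i => cutReach f d (s i)
  -- the farthest position on the cycle, counted from `d`, at which a car of `A` starts
  set Q := Nat.findGreatest (fun p => ∃ i ∈ A, f^[p] d = s i) m with hQdef
  have hstart : ∀ i ∈ A, ∀ p, p ≤ m → f^[p] d = s i → p ≤ Q :=
    fun i hi p hpm h => Nat.le_findGreatest hpm ⟨i, hi, h⟩
  have hgN : ∀ i ∈ A, (∀ p, 0 < p → p ≤ m → f^[p] d ≠ s i) → g i ∈ N := fun i hi hoff =>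
    mem_biUnion.mpr ⟨i, hi, mem_cutReach_of_forall_iterate_ne hd hoff (hgs i).choose_spec⟩
  rcases Nat.eq_zero_or_pos Q with hQ | hQ
  · refine card_le_card_of_injOn g (fun i hi => hgN i hi fun p hp hpm h => ?_) hg.injOn
    have := hstart i hi p hpm h
    omega
  obtain ⟨i₀, hi₀, hQi₀⟩ := Nat.findGreatest_of_ne_zero hQdef.symm hQ.ne'
  refine card_le_card_of_excess_nonpos hg (hex Q hQ (Nat.findGreatest_le m))
    (fun y hy => mem_biUnion.mpr ⟨i₀, hi₀, hQi₀ ▸ hy⟩) fun i hi hsi => ?_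
  have hoff : ∀ p, 0 < p → p ≤ m → f^[p] d ≠ s i := fun p hp hpm h =>
    hsi (h ▸ iterate_mem_cutReach_iterate hp (hstart i hi p hpm h) (Nat.findGreatest_le m))
  refine mem_sdiff.mpr ⟨hgN i hi hoff, fun hgX => ?_⟩
  obtain ⟨k, hk⟩ := hgs i
  rcases iterate_mem_cutReach_or hgX k with h | ⟨r, hr⟩
  · exact hsi (hk ▸ h)
  · obtain ⟨p, hp, hpm, hpe⟩ := exists_iterate_eq_of_pos hd (Nat.add_pos_right (r + 1) hQ)
    exact hoff p hp hpm (by rw [hpe, iterate_add_apply, ← hr, hk])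

end excess

end InverseMappingDigraph

open InverseMappingDigraph in
/-- An edge `(a, b)` lies on a cycle iff `b` reaches `a`; `(c, d)` is on the same cycle iff
moreover `a` and `c` reach each other. -/
theorem inverse_mapping_deletable_cycle_edge (n : ℕ) (f : Fin n → Fin n)
    (s : Fin n → Fin n)
    (hpf : IsPF (fun a b : Fin n => f b = a) s)
    (a b : Fin n) (hab : f b = a)
    (hcyc : Relation.ReflTransGen (fun a b : Fin n => f b = a) b a) :
    ∃ c d : Fin n, f d = c ∧
      Relation.ReflTransGen (fun a b : Fin n => f b = a) d c ∧
      Relation.ReflTransGen (fun a b : Fin n => f b = a) a c ∧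
      Relation.ReflTransGen (fun a b : Fin n => f b = a) c a ∧
      IsPF (fun x y : Fin n => f y = x ∧ ¬(x = c ∧ y = d)) s := by
  obtain ⟨g, hg, hgs⟩ := hpf
  replace hgs : ∀ i, ∃ k, f^[k] (g i) = s i := fun i => reflTransGen_iff_exists_iterate.mp (hgs i)
  obtain ⟨k, hk⟩ := reflTransGen_iff_exists_iterate.mp hcyc
  have ha : a ∈ periodicPts f :=
    ⟨k + 1, k.succ_pos, by rw [IsPeriodicPt, IsFixedPt, iterate_succ_apply', hk, hab]⟩
  obtain ⟨P, hP⟩ := exists_excess_cutReach_nonpos ha fun u hu =>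
    excess_cutReach_self (Finite.injective_iff_bijective.mp hg) hgs hu
  set d := f^[P] a
  have hd : d ∈ periodicPts f :=
    ⟨_, minimalPeriod_pos_of_mem_periodicPts ha, (isPeriodicPt_minimalPeriod f a).apply_iterate P⟩
  obtain ⟨g', hg', hg'd⟩ := (all_card_le_biUnion_card_iff_exists_injective _).mp
    (card_le_card_biUnion_cutReach hg hgs hd (by rwa [minimalPeriod_apply_iterate ha]))
  refine ⟨f d, d, rfl, ?_, ?_, ?_, g', hg', fun i => reflTransGen_of_mem_cutReach (hg'd i)⟩
  · exact reflTransGen_iff_exists_iterate.mpr (exists_iterate_iterate_eq hd (k := 0) rfl 1)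
  · exact reflTransGen_iff_exists_iterate.mpr
      (iterate_succ_apply' f P a ▸ exists_iterate_iterate_eq ha (k := 0) rfl (P + 1))
  · exact reflTransGen_iff_exists_iterate.mpr ⟨P + 1, iterate_succ_apply' f P a⟩
end

section
/- There exists a tree T on 4 vertices (the star with one edge subdivided: 4—3, 3—1, 3—2, rooted at 4 with edges toward the root) such that for m = 2 drivers, P(T, 2) = 15 > 14 = P(T̃, 2). Hence the inequality P(T,m) ≤ P(T̃,m) can fail when m < n. -/
def IsSink {α : Type*} (D : α → α → Prop) (v : α) : Prop :=
  ∀ w, D v w → w = v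

theorem IsSink.eq_of_reflTransGen {α : Type*} {D : α → α → Prop} {v w : α}
    (hv : IsSink D v) (h : Relation.ReflTransGen D v w) : w = v := by
  induction h using Relation.ReflTransGen.head_induction_on with
  | refl => rfl
  | head hvu _ ih =>
    obtain rfl := hv _ hvu
    exact ih hv

theorem injective_fin_two_of_ne {α : Type*} {f : Fin 2 → α} (h : f 0 ≠ f 1) :
    Function.Injective f := by
  intro i j hij
  fin_cases i <;> fin_cases j <;> simp_all [eq_comm]

theorem isPF_two_iff {n : ℕ} {D : Fin n → Fin n → Prop} {s : Fin 2 → Fin n} :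
    IsPF D s ↔ s 0 ≠ s 1 ∨ ¬IsSink D (s 0) := by
  constructor
  · rintro ⟨g, hg, hreach⟩
    by_contra! ⟨hs, hsink⟩
    have h0 : g 0 = s 0 := hsink.eq_of_reflTransGen (hreach 0)
    have h1 : g 1 = s 0 := hsink.eq_of_reflTransGen (hs ▸ hreach 1)
    exact absurd (hg (h0.trans h1.symm)) (by decide)
  · intro h
    by_cases hs : s 0 = s 1
    · obtain ⟨w, hw, hne⟩ : ∃ w, D (s 0) w ∧ w ≠ s 0 := by
        simpa [IsSink] using h.resolve_left (not_not.2 hs)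
      refine ⟨![s 0, w], injective_fin_two_of_ne (Ne.symm hne), fun i => ?_⟩
      fin_cases i
      · exact .refl
      · exact hs ▸ .single hw
    · exact ⟨s, injective_fin_two_of_ne hs, fun _ => .refl⟩

theorem ncard_setOf_isPF_two {n : ℕ} (D : Fin n → Fin n → Prop) :
    {s : Fin 2 → Fin n | IsPF D s}.ncard = n ^ 2 - {v | IsSink D v}.ncard := by
  have hconst : Function.Injective (fun v : Fin n => fun _ : Fin 2 => v) :=
    fun v w h => congrFun h 0
  have hset : {s : Fin 2 → Fin n | IsPF D s} =
      ((fun v : Fin n => fun _ : Fin 2 => v) '' {v | IsSink D v})ᶜ := by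
    ext s
    simp only [Set.mem_ofPred_eq, isPF_two_iff, Set.mem_compl_iff, Set.mem_image, not_exists,
      not_and]
    constructor
    · rintro h v hv rfl
      simp_all
    · intro h
      by_contra! ⟨hs, hsink⟩
      refine h (s 0) hsink (funext fun i => ?_)
      fin_cases i <;> simp [hs]
  rw [hset, Set.ncard_compl, Set.ncard_image_of_injective _ hconst, Nat.card_fun]
  simp

/-- The sink tree on 4 vertices with edges `1 → 3`, `2 → 3`, `3 → 4`
(0-indexed: `0 → 2`, `1 → 2`, `2 → 3`) has 15 parking functions with 2 drivers,
while its reverse (the source tree) has only 14: so `P(T,m) ≤ P(T̃,m)` can fail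
for `m < n`. -/
theorem sink_vs_source_counterexample :
    {s : Fin 2 → Fin 4 |
        IsPF (fun a b : Fin 4 =>
          (a = 0 ∧ b = 2) ∨ (a = 1 ∧ b = 2) ∨ (a = 2 ∧ b = 3)) s}.ncard = 15 ∧
      {s : Fin 2 → Fin 4 |
        IsPF (fun a b : Fin 4 =>
          (b = 0 ∧ a = 2) ∨ (b = 1 ∧ a = 2) ∨ (b = 2 ∧ a = 3)) s}.ncard = 14 ∧
      {s : Fin 2 → Fin 4 |
        IsPF (fun a b : Fin 4 =>
          (b = 0 ∧ a = 2) ∨ (b = 1 ∧ a = 2) ∨ (b = 2 ∧ a = 3)) s}.ncard <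
        {s : Fin 2 → Fin 4 |
          IsPF (fun a b : Fin 4 =>
            (a = 0 ∧ b = 2) ∨ (a = 1 ∧ b = 2) ∨ (a = 2 ∧ b = 3)) s}.ncard := by
  have hsink : {v | IsSink (fun a b : Fin 4 =>
      (a = 0 ∧ b = 2) ∨ (a = 1 ∧ b = 2) ∨ (a = 2 ∧ b = 3)) v} = {3} := by
    ext v
    simp only [IsSink, Set.mem_ofPred_eq, Set.mem_singleton_iff]
    revert v
    decide
  have hsource : {v | IsSink (fun a b : Fin 4 =>
      (b = 0 ∧ a = 2) ∨ (b = 1 ∧ a = 2) ∨ (b = 2 ∧ a = 3)) v} = {0, 1} := by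
    ext v
    simp only [IsSink, Set.mem_ofPred_eq, Set.mem_insert_iff, Set.mem_singleton_iff]
    revert v
    decide
  rw [ncard_setOf_isPF_two, ncard_setOf_isPF_two, hsink, hsource, Set.ncard_singleton,
    Set.ncard_pair (by decide)]
  norm_num
end

section
/- Let T̃ be a source tree on [n], s ∈ [n]^n, and (u,w) an edge of T̃ such that |{i : s_i ∈ T̃_w}| = |T̃_w|. If s is a parking function on T̃, then at least one s_i equals w, and in every successful parking assignment no driver starting outside T̃_w parks inside T̃_w (i.e., every injection g witnessing the parking function maps {i : s_i ∈ T̃_w} bijectively onto T̃_w). -/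
/-!
Every driver preferring a spot of `T̃_w` parks in `T̃_w`, so a successful assignment maps the
`|T̃_w|` drivers preferring `T̃_w` injectively, hence bijectively, onto `T̃_w`. In particular
some such driver parks at `w`; reachability being antisymmetric in a tree, that driver
prefers `w` itself.
-/

open Relation

section UniqueParent

variable {α : Type*} {D : α → α → Prop} {r : α}

/-- Walking back from a cycle through `v` along unique parents never reaches the root, which has
no parent. -/
theorem not_transGen_self_of_unique_parent (hpar : ∀ u u' v, D u v → D u' v → u = u')
    (hroot : ∀ u, ¬ D u r) {v : α} (hrv : ReflTransGen D r v) : ¬ TransGen D v v := by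
  induction hrv with
  | refl =>
    intro hcyc
    obtain ⟨c, -, hcr⟩ := TransGen.tail'_iff.mp hcyc
    exact hroot c hcr
  | @tail b c _ hbc ih =>
    intro hcyc
    obtain ⟨z, hcz, hzc⟩ := TransGen.tail'_iff.mp hcyc
    obtain rfl : z = b := hpar z b c hzc hbc
    exact ih (TransGen.head' hbc hcz)

theorem reflTransGen_antisymm_of_unique_parent (hpar : ∀ u u' v, D u v → D u' v → u = u')
    (hroot : ∀ u, ¬ D u r) (hr : ∀ v, ReflTransGen D r v) {a b : α}
    (hab : ReflTransGen D a b) (hba : ReflTransGen D b a) : a = b := by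
  rcases hab.cases_head with rfl | ⟨c, hac, hcb⟩
  · rfl
  · exact (not_transGen_self_of_unique_parent hpar hroot (hr a)
      (TransGen.head' hac (hcb.trans hba))).elim

end UniqueParent

theorem IsSourceTree.reflTransGen_antisymm {n : ℕ} {D : Fin n → Fin n → Prop} {r : Fin n}
    (hT : IsSourceTree D r) {a b : Fin n} (hab : ReflTransGen D a b)
    (hba : ReflTransGen D b a) : a = b :=
  reflTransGen_antisymm_of_unique_parent hT.2.1 hT.2.2 hT.1 hab hba

theorem image_eq_subtree_of_ncard_eq {ι α : Type*} [Finite α] {D : α → α → Prop}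
    {s g : ι → α} (hg : Function.Injective g) (hsg : ∀ i, ReflTransGen D (s i) (g i)) {w : α}
    (hfull : {i | ReflTransGen D w (s i)}.ncard = {v | ReflTransGen D w v}.ncard) :
    g '' {i | ReflTransGen D w (s i)} = {v | ReflTransGen D w v} := by
  have hsub : g '' {i | ReflTransGen D w (s i)} ⊆ {v | ReflTransGen D w v} := by
    rintro _ ⟨i, hi, rfl⟩
    exact hi.trans (hsg i)
  refine Set.eq_of_subset_of_ncard_le hsub ?_ (Set.toFinite _)
  rw [Set.ncard_image_of_injective _ hg, hfull]

theorem full_subtree_edge_unused_general (n : ℕ) (D : Fin n → Fin n → Prop) (r : Fin n)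
    (hT : IsSourceTree D r) (s : Fin n → Fin n) (w : Fin n)
    (hfull : {i : Fin n | Relation.ReflTransGen D w (s i)}.ncard =
      {v : Fin n | Relation.ReflTransGen D w v}.ncard)
    (hpf : ∃ g : Fin n → Fin n, Function.Injective g ∧
      ∀ i, Relation.ReflTransGen D (s i) (g i)) :
    (∃ i, s i = w) ∧
      ∀ g : Fin n → Fin n, Function.Bijective g →
        (∀ i, Relation.ReflTransGen D (s i) (g i)) →
        ∀ i, Relation.ReflTransGen D w (g i) → Relation.ReflTransGen D w (s i) := by
  constructor
  · obtain ⟨g, hg, hsg⟩ := hpf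
    have hw : w ∈ g '' {i | ReflTransGen D w (s i)} := by
      rw [image_eq_subtree_of_ncard_eq hg hsg hfull]
      exact ReflTransGen.refl
    obtain ⟨i, hwi, rfl⟩ := hw
    exact ⟨i, hT.reflTransGen_antisymm (hsg i) hwi⟩
  · intro g hg hsg i hwi
    have hmem : g i ∈ g '' {i | ReflTransGen D w (s i)} := by
      rwa [image_eq_subtree_of_ncard_eq hg.injective hsg hfull]
    exact (hg.injective.mem_set_image (s := {i | ReflTransGen D w (s i)})).mp hmem

/-- If `(u,w)` is an edge of a source tree and exactly `|T̃_w|` drivers prefer the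
subtree `T̃_w`, then for a parking function `s` some driver prefers `w`, and in any
successful parking assignment `g`, drivers park inside `T̃_w` exactly when they
prefer a spot in `T̃_w`. -/
theorem full_subtree_edge_unused (n : ℕ) (D : Fin n → Fin n → Prop) (r : Fin n)
    (hT : IsSourceTree D r) (s : Fin n → Fin n) (u w : Fin n) (huw : D u w)
    (hfull : {i : Fin n | Relation.ReflTransGen D w (s i)}.ncard =
      {v : Fin n | Relation.ReflTransGen D w v}.ncard)
    (hpf : ∃ g : Fin n → Fin n, Function.Injective g ∧
      ∀ i, Relation.ReflTransGen D (s i) (g i)) :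
    (∃ i, s i = w) ∧
      ∀ g : Fin n → Fin n, Function.Bijective g →
        (∀ i, Relation.ReflTransGen D (s i) (g i)) →
        ∀ i, Relation.ReflTransGen D w (g i) → Relation.ReflTransGen D w (s i) :=
  full_subtree_edge_unused_general n D r hT s w hfull hpf
end
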